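/- Let F be a field satisfying condition Π_k, let k ≥ 2, and let A be a k×(n−k) matrix over F such that the block matrix G = (I_k | A) is not an LCED matrix. Then there exists a constant β ∈ F with (n−k)·β² = −k such that the sum of the entries on every column of A equals β. -/

import Mathlib

/-!
Choosing the block permutation `σ ⊕ τ` shows that `P_σ + A P_τ Aᵀ` is singular for all
`σ ∈ S_k`, `τ ∈ S_m`. For an involution `τ` the matrix `M = A P_τ Aᵀ` is symmetric and
`1 + P_σ M = P_σ (P_σ⁻¹ + M)` is singular, so `Π_k` says that the entry sum
`∑ p, c (τ p) * c p` of `M` is `-k`, where `c` is the vector of column sums of `A`.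
Subtracting the case `τ = 1` from the case of a transposition `(j j')` leaves
`-(c j - c j')² = 0`, so `c` is constant, and `τ = 1` then gives `m β² = -k`.
-/

open Matrix

/-- The permutation matrix of `σ`: the `(i, j)` entry is `1` if `σ j = i` and `0` otherwise. -/
def permMat (F : Type*) [Zero F] [One F] {n : Type*} [DecidableEq n]
    (σ : Equiv.Perm n) : Matrix n n F :=
  Matrix.of fun i j => if σ j = i then 1 else 0

/-- A matrix `G` over a field is an LCED matrix if there is a permutation matrix `P`
such that `G * P * Gᵀ` is invertible. -/
def IsLCEDMatrix {F : Type*} [Field F] {k n : Type*} [Fintype k] [Fintype n]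
    [DecidableEq k] [DecidableEq n] (G : Matrix k n F) : Prop :=
  ∃ σ : Equiv.Perm n, IsUnit (G * permMat F σ * Gᵀ)

/-- A field `F` satisfies condition `Π_k` if every symmetric `k × k` matrix `M` such that
`-1` is an eigenvalue of `P * M` for every permutation matrix `P` has the sum of all of
its entries equal to `-k`. -/
def PiCond (F : Type*) [Field F] (k : ℕ) : Prop :=
  ∀ M : Matrix (Fin k) (Fin k) F, M.IsSymm →
    (∀ σ : Equiv.Perm (Fin k), ((1 : Matrix (Fin k) (Fin k) F) + permMat F σ * M).det = 0) →
    ∑ i, ∑ j, M i j = -(k : F)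

section PermMat

variable {R : Type*} {n : Type*} [DecidableEq n]

theorem permMat_eq_permMatrix_inv [Zero R] [One R] (σ : Equiv.Perm n) :
    permMat R σ = σ⁻¹.permMatrix R := by
  ext i j
  simp [permMat, PEquiv.toMatrix_apply, Equiv.eq_symm_apply, eq_comm]

theorem permMat_one [Zero R] [One R] : permMat R (1 : Equiv.Perm n) = 1 := by
  simp [permMat_eq_permMatrix_inv]

theorem permMat_transpose [Zero R] [One R] (σ : Equiv.Perm n) :
    (permMat R σ)ᵀ = permMat R σ⁻¹ := by
  simp [permMat_eq_permMatrix_inv, transpose_permMatrix]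

theorem permMat_sumCongr [Zero R] [One R] {p : Type*} [DecidableEq p]
    (σ : Equiv.Perm n) (τ : Equiv.Perm p) :
    permMat R (Equiv.sumCongr σ τ) = fromBlocks (permMat R σ) 0 0 (permMat R τ) := by
  ext (i | i) (j | j) <;> simp [permMat, fromBlocks]

variable [Fintype n] [NonAssocSemiring R]

theorem permMat_mul_permMat (σ τ : Equiv.Perm n) :
    permMat R σ * permMat R τ = permMat R (σ * τ) := by
  simp [permMat_eq_permMatrix_inv, permMatrix_mul]

theorem mul_permMat_apply {l : Type*} (M : Matrix l n R) (σ : Equiv.Perm n) (i : l) (j : n) :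
    (M * permMat R σ) i j = M i (σ j) := by
  simp [permMat_eq_permMatrix_inv, PEquiv.mul_toMatrix_toPEquiv, Equiv.Perm.inv_def]

end PermMat

section ColumnSums

variable {R : Type*} [CommSemiring R] {κ ι : Type*} [Fintype ι] [DecidableEq ι]

theorem isSymm_mul_permMat_mul_transpose (A : Matrix κ ι R) {τ : Equiv.Perm ι} (hτ : τ⁻¹ = τ) :
    (A * permMat R τ * Aᵀ).IsSymm := by
  rw [IsSymm, transpose_mul, transpose_mul, transpose_transpose, permMat_transpose, hτ,
    Matrix.mul_assoc]

theorem sum_mul_permMat_mul_transpose_apply [Fintype κ] (A : Matrix κ ι R) (τ : Equiv.Perm ι) :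
    ∑ i, ∑ i', (A * permMat R τ * Aᵀ) i i' = ∑ p, (∑ i, A i (τ p)) * ∑ i, A i p := by
  have entry (i i' : κ) : (A * permMat R τ * Aᵀ) i i' = ∑ p, A i (τ p) * A i' p := by
    simp only [Matrix.mul_apply (M := A * permMat R τ), mul_permMat_apply, transpose_apply]
  simp only [entry, Finset.sum_mul_sum]
  exact Finset.sum_comm_cycle

end ColumnSums

theorem fromCols_one_mul_permMat_sumCongr_mul_transpose {R : Type*} [CommRing R]
    {κ ι : Type*} [Fintype κ] [Fintype ι] [DecidableEq κ] [DecidableEq ι]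
    (A : Matrix κ ι R) (σ : Equiv.Perm κ) (τ : Equiv.Perm ι) :
    fromCols (1 : Matrix κ κ R) A * permMat R (Equiv.sumCongr σ τ) *
        (fromCols (1 : Matrix κ κ R) A)ᵀ = permMat R σ + A * permMat R τ * Aᵀ := by
  rw [permMat_sumCongr, fromCols_mul_fromBlocks, transpose_fromCols, fromCols_mul_fromRows]
  simp [Matrix.mul_assoc]

theorem det_permMat_add_eq_zero_of_not_isLCEDMatrix {F : Type*} [Field F]
    {κ ι : Type*} [Fintype κ] [Fintype ι] [DecidableEq κ] [DecidableEq ι]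
    {A : Matrix κ ι F} (h : ¬ IsLCEDMatrix (fromCols (1 : Matrix κ κ F) A)) (σ : Equiv.Perm κ)
    (τ : Equiv.Perm ι) : (permMat F σ + A * permMat F τ * Aᵀ).det = 0 := by
  by_contra hdet
  refine h ⟨Equiv.sumCongr σ τ, ?_⟩
  rw [fromCols_one_mul_permMat_sumCongr_mul_transpose, isUnit_iff_isUnit_det]
  exact isUnit_iff_ne_zero.2 hdet

theorem det_one_add_permMat_mul_eq_zero {R : Type*} [CommRing R] {n : Type*} [Fintype n]
    [DecidableEq n] {M : Matrix n n R} (hM : ∀ σ : Equiv.Perm n, (permMat R σ + M).det = 0)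
    (σ : Equiv.Perm n) : (1 + permMat R σ * M).det = 0 := by
  have factor : 1 + permMat R σ * M = permMat R σ * (permMat R σ⁻¹ + M) := by
    rw [Matrix.mul_add, permMat_mul_permMat, mul_inv_cancel, permMat_one]
  rw [factor, det_mul, hM, mul_zero]

theorem eq_of_sum_mul_swap_eq_sum_mul_self {R : Type*} [CommRing R] [NoZeroDivisors R]
    {ι : Type*} [Fintype ι] [DecidableEq ι] {c : ι → R} {j j' : ι}
    (h : ∑ p, c (Equiv.swap j j' p) * c p = ∑ p, c p * c p) : c j = c j' := by
  obtain rfl | hjj' := eq_or_ne j j'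
  · rfl
  have diff : ∑ p, (c (Equiv.swap j j' p) * c p - c p * c p) =
      (c j' * c j - c j * c j) + (c j * c j' - c j' * c j') := by
    rw [Fintype.sum_eq_add j j' hjj']
    · simp
    · rintro p ⟨hpj, hpj'⟩
      rw [Equiv.swap_apply_of_ne_of_ne hpj hpj', sub_self]
  rw [Finset.sum_sub_distrib, h, sub_self] at diff
  have sq_eq_zero : (c j - c j') ^ 2 = 0 := by linear_combination diff
  exact sub_eq_zero.1 (pow_eq_zero_iff two_ne_zero |>.1 sq_eq_zero)

theorem exists_eq_const_of_forall_eq {R : Type*} [CommSemiring R] {ι : Type*} [Fintype ι]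
    {c : ι → R} (hc : ∀ j j', c j = c j') :
    ∃ β : R, (Fintype.card ι : R) * β ^ 2 = ∑ p, c p * c p ∧ ∀ j, c j = β := by
  cases isEmpty_or_nonempty ι with
  | inl _ => exact ⟨0, by simp, isEmptyElim⟩
  | inr hι =>
    obtain ⟨j₀⟩ := hι
    refine ⟨c j₀, ?_, fun j => hc j j₀⟩
    simp [hc _ j₀, Finset.sum_const, sq]

theorem stmt11_general {F : Type*} [Field F] {k m : ℕ} (hPi : PiCond F k)
    (A : Matrix (Fin k) (Fin m) F)
    (h : ¬ IsLCEDMatrix (fromCols (1 : Matrix (Fin k) (Fin k) F) A)) :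
    ∃ β : F, (m : F) * β ^ 2 = -(k : F) ∧ ∀ j, ∑ i, A i j = β := by
  set c : Fin m → F := fun j => ∑ i, A i j
  have key (τ : Equiv.Perm (Fin m)) (hτ : τ⁻¹ = τ) : ∑ p, c (τ p) * c p = -(k : F) := by
    rw [← sum_mul_permMat_mul_transpose_apply]
    exact hPi _ (isSymm_mul_permMat_mul_transpose A hτ)
      (det_one_add_permMat_mul_eq_zero fun σ =>
        det_permMat_add_eq_zero_of_not_isLCEDMatrix h σ τ)
  have sum_sq : ∑ p, c p * c p = -(k : F) := key 1 inv_one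
  have const (j j' : Fin m) : c j = c j' :=
    eq_of_sum_mul_swap_eq_sum_mul_self ((key _ (Equiv.swap_inv j j')).trans sum_sq.symm)
  simpa [sum_sq] using exists_eq_const_of_forall_eq const

/-- if `F` satisfies `Π_k`, `k ≥ 2`, and `(I_k | A)` is not an LCED matrix,
then there is `β ∈ F` with `(n-k)·β² = -k` such that every column of `A` sums to `β`. -/
theorem stmt11 {F : Type*} [Field F] {k m : ℕ} (hk : 2 ≤ k) (hPi : PiCond F k)
    (A : Matrix (Fin k) (Fin m) F)
    (h : ¬ IsLCEDMatrix (fromCols (1 : Matrix (Fin k) (Fin k) F) A)) :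
    ∃ β : F, (m : F) * β ^ 2 = -(k : F) ∧ ∀ j, ∑ i, A i j = β :=
  stmt11_general hPi A h
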